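/- arXiv:2401.08849 — 4 statements merged into one kernel-verified Lean document; each statement's English description precedes it below -/
import Mathlib

section
/- Let (a_n)_{n∈ℕ} be a sequence of nonnegative real numbers with a₁ > 0, and let S_n = a₁ + a₂ + ⋯ + a_n. Then for every real ξ > 0 the series Σ_{n=1}^∞ a_n / S_n^{1+ξ} converges. -/
/-!
By convexity of `x ↦ x ^ (-ξ)`, the term `(S_{n+1} - S_n) / S_{n+1} ^ (1 + ξ)` is at most
`(S_n ^ (-ξ) - S_{n+1} ^ (-ξ)) / ξ` for `n ≥ 1`; these bounds telescope, so the partial sums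
of the nonnegative series stay below `a_1 / S_1 ^ (1 + ξ) + S_1 ^ (-ξ) / ξ`.
-/

theorem sub_div_rpow_one_add_le {ξ s t : ℝ} (hξ : 0 < ξ) (hs : 0 < s) (hst : s ≤ t) :
    (t - s) / t ^ (1 + ξ) ≤ (s ^ (-ξ) - t ^ (-ξ)) / ξ := by
  rcases hst.eq_or_lt with rfl | hst
  · simp
  have hderiv : ∀ x ∈ Set.Ioo s t, HasDerivAt (fun x : ℝ => x ^ (-ξ)) (-ξ * x ^ (-ξ - 1)) x :=
    fun x hx => Real.hasDerivAt_rpow_const (Or.inl (hs.trans hx.1).ne')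
  have hcont : ContinuousOn (fun x : ℝ => x ^ (-ξ)) (Set.Icc s t) :=
    continuousOn_id.rpow_const fun x hx => Or.inl (hs.trans_le hx.1).ne'
  obtain ⟨c, ⟨hsc, hct⟩, hslope⟩ := exists_hasDerivAt_eq_slope _ _ hst hcont hderiv
  have hmvt : s ^ (-ξ) - t ^ (-ξ) = ξ * c ^ (-ξ - 1) * (t - s) := by
    rw [eq_div_iff (sub_ne_zero.mpr hst.ne')] at hslope
    linear_combination hslope
  have hpow : t ^ (-ξ - 1) ≤ c ^ (-ξ - 1) :=
    Real.rpow_le_rpow_of_nonpos (hs.trans hsc) hct.le (by linarith)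
  calc (t - s) / t ^ (1 + ξ) = (t - s) * t ^ (-ξ - 1) := by
        rw [div_eq_mul_inv, ← Real.rpow_neg (hs.trans hst).le]
        ring_nf
    _ ≤ (t - s) * c ^ (-ξ - 1) := mul_le_mul_of_nonneg_left hpow (sub_nonneg.mpr hst.le)
    _ = (s ^ (-ξ) - t ^ (-ξ)) / ξ := by rw [hmvt]; field_simp

theorem summable_of_nonneg_of_le_sub_succ {f g : ℕ → ℝ} (hf : ∀ n, 0 ≤ f n)
    (hg : ∀ n, 0 ≤ g n) (hfg : ∀ n, f n ≤ g n - g (n + 1)) : Summable f := by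
  refine summable_of_sum_range_le (c := g 0) hf fun n => ?_
  calc ∑ i ∈ Finset.range n, f i ≤ ∑ i ∈ Finset.range n, (g i - g (i + 1)) :=
        Finset.sum_le_sum fun i _ => hfg i
    _ = g 0 - g n := Finset.sum_range_sub' g n
    _ ≤ g 0 := sub_le_self _ (hg n)

theorem summable_sub_div_rpow_one_add {T : ℕ → ℝ} (hT : Monotone T) (hT0 : 0 < T 0)
    {ξ : ℝ} (hξ : 0 < ξ) : Summable fun n => (T (n + 1) - T n) / T (n + 1) ^ (1 + ξ) := by
  have hpos : ∀ n, 0 < T n := fun n => hT0.trans_le (hT n.zero_le)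
  refine summable_of_nonneg_of_le_sub_succ (g := fun n => T n ^ (-ξ) / ξ) (fun n => ?_)
    (fun n => div_nonneg (Real.rpow_nonneg (hpos n).le _) hξ.le) (fun n => ?_)
  · exact div_nonneg (sub_nonneg.mpr (hT n.le_succ)) (Real.rpow_pos_of_pos (hpos _) _).le
  · rw [← sub_div]
    exact sub_div_rpow_one_add_le hξ (hpos n) (hT n.le_succ)

/-- if `a₁ > 0` and `a_n ≥ 0`, with `S_n = a₁ + ⋯ + a_n`, then for every
`ξ > 0` the series `Σ a_n / S_n^{1+ξ}` converges. -/
theorem summable_div_partialSum_rpow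
    (a : ℕ → ℝ) (ha0 : ∀ n, 0 ≤ a n) (ha1 : 0 < a 1)
    (S : ℕ → ℝ) (hS : ∀ n, S n = ∑ k ∈ Finset.Icc 1 n, a k)
    (ξ : ℝ) (hξ : 0 < ξ) :
    Summable (fun n : ℕ => a (n + 1) / (S (n + 1)) ^ ((1 : ℝ) + ξ)) := by
  have hS_succ : ∀ n, S (n + 1) = S n + a (n + 1) := fun n => by
    rw [hS, hS, Finset.sum_Icc_succ_top (by omega)]
  have hmono : Monotone fun n => S (n + 1) :=
    monotone_nat_of_le_succ fun n => by rw [hS_succ (n + 1)]; linarith [ha0 (n + 2)]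
  have hS1 : 0 < S 1 := by simpa [hS] using ha1
  refine (summable_nat_add_iff 1).mp
    ((summable_sub_div_rpow_one_add hmono hS1 hξ).congr fun n => ?_)
  rw [hS_succ (n + 1), add_sub_cancel_left]
end

section
/- Let (a_n)_{n∈ℕ} be a sequence of nonnegative real numbers with a₁ > 0, and let S_n = a₁ + a₂ + ⋯ + a_n. Then for every N ∈ ℕ the partial sum satisfies Σ_{n=1}^{N} a_n / S_n ≤ 1 + log(S_N) − log(a₁). -/
/-! Since `1 - x / y ≤ log (y / x)`, each term `a n / S n = (S n - S (n - 1)) / S n` with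
`n ≥ 2` is at most `log S n - log S (n - 1)`. These bounds telescope to
`log S N - log S 1 = log S N - log a₁`, and the first term `a₁ / S₁` contributes the `1`. -/

open Finset Real

theorem sub_div_le_log_sub_log {x y : ℝ} (hx : 0 < x) (hy : 0 < y) :
    (y - x) / y ≤ log y - log x := by
  have h := one_sub_inv_le_log_of_pos (div_pos hy hx)
  rwa [inv_div, one_sub_div hy.ne', log_div hy.ne' hx.ne'] at h

theorem sum_Ico_sub_div_le_log_sub_log (S : ℕ → ℝ) {m N : ℕ} (hmN : m ≤ N)
    (hS : ∀ n ∈ Icc m N, 0 < S n) :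
    ∑ n ∈ Ico m N, (S (n + 1) - S n) / S (n + 1) ≤ log (S N) - log (S m) := by
  calc ∑ n ∈ Ico m N, (S (n + 1) - S n) / S (n + 1)
      ≤ ∑ n ∈ Ico m N, (log (S (n + 1)) - log (S n)) := by
        refine sum_le_sum fun n hn => ?_
        rw [mem_Ico] at hn
        exact sub_div_le_log_sub_log (hS n (mem_Icc.2 ⟨hn.1, hn.2.le⟩))
          (hS (n + 1) (mem_Icc.2 ⟨by omega, hn.2⟩))
    _ = log (S N) - log (S m) := sum_Ico_sub (fun n => log (S n)) hmN

theorem sum_Icc_eq_add_sum_Ico_succ {M : Type*} [AddCommMonoid M] (f : ℕ → M) {N : ℕ}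
    (hN : 1 ≤ N) :
    ∑ n ∈ Icc 1 N, f n = f 1 + ∑ n ∈ Ico 1 N, f (n + 1) := by
  rw [← Ico_add_one_right_eq_Icc, sum_eq_sum_Ico_succ_bot (by omega), sum_Ico_add']

/-- if `a₁ > 0` and `a_n ≥ 0`, with `S_n = a₁ + ⋯ + a_n`, then for every
`N ∈ ℕ` one has `Σ_{n=1}^N a_n / S_n ≤ 1 + log S_N − log a₁`. -/
theorem partialSum_div_le_one_add_log
    (a : ℕ → ℝ) (ha0 : ∀ n, 0 ≤ a n) (ha1 : 0 < a 1)
    (S : ℕ → ℝ) (hS : ∀ n, S n = ∑ k ∈ Finset.Icc 1 n, a k)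
    (N : ℕ) (hN : 1 ≤ N) :
    ∑ n ∈ Finset.Icc 1 N, a n / S n ≤ 1 + Real.log (S N) - Real.log (a 1) := by
  have hS1 : S 1 = a 1 := by simp [hS]
  have hS_succ (n : ℕ) : S (n + 1) - S n = a (n + 1) := by
    rw [hS, hS, sum_Icc_succ_top (by omega), add_sub_cancel_left]
  have hS_pos : ∀ n ∈ Icc 1 N, 0 < S n := fun n hn =>
    ha1.trans_le <| hS n ▸ single_le_sum (fun k _ => ha0 k)
      (mem_Icc.2 ⟨le_rfl, (mem_Icc.1 hn).1⟩)
  have htail := sum_Ico_sub_div_le_log_sub_log S hN hS_pos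
  simp only [hS_succ, hS1] at htail
  rw [sum_Icc_eq_add_sum_Ico_succ _ hN, hS1, div_self ha1.ne']
  linarith
end

section
/- Let ρ₁, ρ₂ be real numbers with 1 < ρ₁ and 6ρ₁ < ρ₂. Then there exists a strictly increasing sequence (q_m)_{m∈ℕ} of positive integers which is (1/ρ₁)-separated, satisfies q_m > m for every m ∈ ℕ, and satisfies (log q_m)/(log m) ≤ ρ₂/(ρ₁ − 1) + 1 for all sufficiently large m. -/
open MeasureTheory Filter Finset

/-- Distance from a real number to the nearest integer. -/
noncomputable def distNearestInt (x : ℝ) : ℝ := |x - round x|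

/-- `approxSet Q γ ψ = E(Q, γ, ψ) = {x ∈ [0,1] : ‖Qx − γ‖ ≤ ψ(Q)}`. -/
noncomputable def approxSet (Q : ℕ) (γ : ℝ) (ψ : ℕ → ℝ) : Set ℝ :=
  {x ∈ Set.Icc (0:ℝ) 1 | distNearestInt ((Q : ℝ) * x - γ) ≤ ψ Q}

open scoped Classical in
/-- The counting function `R(x, N) = #{1 ≤ n ≤ N : x ∈ E(q_n, γ, ψ)}`. -/
noncomputable def countR (q : ℕ → ℕ) (γ : ℝ) (ψ : ℕ → ℝ) (x : ℝ) (N : ℕ) : ℕ :=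
  ((Finset.Icc 1 N).filter fun n => x ∈ approxSet (q n) γ ψ).card

/-- A sequence `(q_n)` of positive integers is `α`-separated. -/
def alphaSeparated (q : ℕ → ℕ) (α : ℝ) : Prop :=
  ∃ m₀ : ℕ, ∀ m n : ℕ, m₀ ≤ m → m < n →
    ¬ ∃ s t : ℕ, 1 ≤ |(s : ℤ) * (q m : ℤ) - (t : ℤ) * (q n : ℤ)| ∧
        ((|(s : ℤ) * (q m : ℤ) - (t : ℤ) * (q n : ℤ)| : ℤ) : ℝ) < (q m : ℝ) ^ α ∧
        s ≤ m ^ 5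

/-- Fourier transform `μ̂(t) = ∫ e^{−2πitx} dμ(x)` of a finite measure on `ℝ`, at `t ∈ ℤ`. -/
noncomputable def muHat (μ : Measure ℝ) (t : ℤ) : ℂ :=
  ∫ x, Complex.exp (-2 * Real.pi * Complex.I * (t : ℂ) * (x : ℂ)) ∂μ

/-- `Ψ(N) = Σ_{n=1}^N ψ(q_n)`. -/
noncomputable def PsiSum (q : ℕ → ℕ) (ψ : ℕ → ℝ) (N : ℕ) : ℝ :=
  ∑ n ∈ Finset.Icc 1 N, ψ (q n)

/-- `E(N) = Σ_{1 ≤ m < n ≤ N} gcd(q_m, q_n) · min(ψ(q_m)/q_m, ψ(q_n)/q_n)`. -/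
noncomputable def gcdErr (q : ℕ → ℕ) (ψ : ℕ → ℝ) (N : ℕ) : ℝ :=
  ∑ n ∈ Finset.Icc 1 N, ∑ m ∈ Finset.Ico 1 n,
    (Nat.gcd (q m) (q n) : ℝ) * min (ψ (q m) / (q m : ℝ)) (ψ (q n) / (q n : ℝ))

/-- `W_A(γ; ψ)`: points of `[0,1]` inhomogeneously `ψ`-well approximable along `A = (q_n)`. -/
def Wset (q : ℕ → ℕ) (γ : ℝ) (ψ : ℕ → ℝ) : Set ℝ :=
  {x ∈ Set.Icc (0:ℝ) 1 |
    ∀ m : ℕ, ∃ n : ℕ, m ≤ n ∧ 1 ≤ n ∧ distNearestInt ((q n : ℝ) * x - γ) ≤ ψ (q n)}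

/-! The sequence `q_m = (m + 1) · 2^(K ⌊log₂ (m + 1)⌋)` works for `K = ⌈2 / (ρ₁ - 1)⌉`.
For `m ≤ n`, the factor `B_m = 2^(K ⌊log₂ (m + 1)⌋)` divides both `q_m` and `q_n`, so every nonzero
`s q_m - t q_n` has absolute value at least `B_m`; and `K (ρ₁ - 1) ≥ 2` gives
`m + 1 ≤ B_m^(ρ₁ - 1)`, i.e. `q_m ≤ B_m^ρ₁`. Since `2^⌊log₂ (m + 1)⌋ ≤ m + 1`, also
`q_m ≤ (m + 1)^(K + 1) ≤ m^(2K + 2)`, and `6 ρ₁ < ρ₂` makes `2K + 2 ≤ ρ₂ / (ρ₁ - 1) + 1`. -/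

theorem alphaSeparated_of_dvd {q b : ℕ → ℕ} {α : ℝ} (m₀ : ℕ)
    (hdvd : ∀ m n, m₀ ≤ m → m ≤ n → b m ∣ q n) (hb : ∀ m, m₀ ≤ m → (q m : ℝ) ^ α ≤ b m) :
    alphaSeparated q α := by
  refine ⟨m₀, fun m n hm hmn ⟨s, t, hone, hlt, _⟩ => ?_⟩
  have hdvd_diff : (b m : ℤ) ∣ (s : ℤ) * q m - (t : ℤ) * q n :=
    dvd_sub (dvd_mul_of_dvd_right (Int.natCast_dvd_natCast.mpr (hdvd m m hm le_rfl)) _)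
      (dvd_mul_of_dvd_right (Int.natCast_dvd_natCast.mpr (hdvd m n hm hmn.le)) _)
  have hle : (b m : ℤ) ≤ |(s : ℤ) * q m - (t : ℤ) * q n| :=
    Int.le_of_dvd (by omega) ((dvd_abs _ _).mpr hdvd_diff)
  have hleR : (b m : ℝ) ≤ ((|(s : ℤ) * q m - (t : ℤ) * q n| : ℤ) : ℝ) := by exact_mod_cast hle
  linarith [hb m hm]

theorem Real.mul_rpow_one_div_le {a B ρ : ℝ} (hρ : 0 < ρ) (ha : 0 ≤ a) (hB : 0 < B)
    (h : a ≤ B ^ (ρ - 1)) : (a * B) ^ (1 / ρ) ≤ B := by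
  have hρB : a * B ≤ B ^ ρ := by
    calc a * B ≤ B ^ (ρ - 1) * B := by gcongr
      _ = B ^ ρ := by rw [← Real.rpow_add_one hB.ne', sub_add_cancel]
  calc (a * B) ^ (1 / ρ) ≤ (B ^ ρ) ^ ρ⁻¹ := by rw [one_div]; gcongr
    _ = B := Real.rpow_rpow_inv hB.le hρ.ne'

theorem Nat.lt_two_pow_two_mul_log {n : ℕ} (hn : 2 ≤ n) : n < 2 ^ (2 * Nat.log 2 n) := by
  have hlog : 0 < Nat.log 2 n := Nat.log_pos (by norm_num) hn
  calc n < 2 ^ (Nat.log 2 n + 1) := Nat.lt_pow_succ_log_self (by norm_num) n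
    _ ≤ 2 ^ (2 * Nat.log 2 n) := Nat.pow_le_pow_right (by norm_num) (by omega)

theorem Real.log_div_log_le_of_le_pow {a m k : ℕ} (ha : 0 < a) (hm : 1 < m) (h : a ≤ m ^ k) :
    Real.log a / Real.log m ≤ k := by
  have hlog_m : 0 < Real.log m := Real.log_pos (by exact_mod_cast hm)
  rw [div_le_iff₀ hlog_m, ← Real.log_pow]
  exact Real.log_le_log (by exact_mod_cast ha) (by exact_mod_cast h)

def dyadicScaled (K m : ℕ) : ℕ := (m + 1) * 2 ^ (K * Nat.log 2 (m + 1))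

namespace dyadicScaled

variable (K : ℕ)

theorem strictMono : StrictMono (dyadicScaled K) := by
  intro m n hmn
  have hlog : Nat.log 2 (m + 1) ≤ Nat.log 2 (n + 1) := Nat.log_mono_right (by omega)
  calc (m + 1) * 2 ^ (K * Nat.log 2 (m + 1)) < (n + 1) * 2 ^ (K * Nat.log 2 (m + 1)) := by
        gcongr
    _ ≤ (n + 1) * 2 ^ (K * Nat.log 2 (n + 1)) := by gcongr; norm_num

theorem lt_self (m : ℕ) : m < dyadicScaled K m :=
  calc m < m + 1 := m.lt_succ_self
    _ ≤ dyadicScaled K m := Nat.le_mul_of_pos_right _ (Nat.two_pow_pos _)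

theorem pow_dvd {m n : ℕ} (hmn : m ≤ n) : 2 ^ (K * Nat.log 2 (m + 1)) ∣ dyadicScaled K n :=
  dvd_mul_of_dvd_right (pow_dvd_pow 2 (Nat.mul_le_mul_left K (Nat.log_mono_right (by omega)))) _

theorem rpow_one_div_le {ρ : ℝ} (hρ : 1 < ρ) (hK : 2 ≤ K * (ρ - 1)) {m : ℕ} (hm : 1 ≤ m) :
    (dyadicScaled K m : ℝ) ^ (1 / ρ) ≤ (2 ^ (K * Nat.log 2 (m + 1)) : ℕ) := by
  set L := Nat.log 2 (m + 1)
  have hsucc : (m + 1 : ℝ) < 2 ^ (2 * L) := by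
    exact_mod_cast Nat.lt_two_pow_two_mul_log (n := m + 1) (by omega)
  have hexp : ((2 * L : ℕ) : ℝ) ≤ (K * L : ℕ) * (ρ - 1) := by
    push_cast; nlinarith [(L.cast_nonneg : (0 : ℝ) ≤ L)]
  have hsucc_le : (m + 1 : ℝ) ≤ ((2 ^ (K * L) : ℕ) : ℝ) ^ (ρ - 1) := by
    calc (m + 1 : ℝ) ≤ (2 : ℝ) ^ ((2 * L : ℕ) : ℝ) := by rw [Real.rpow_natCast]; exact hsucc.le
      _ ≤ (2 : ℝ) ^ ((K * L : ℕ) * (ρ - 1)) := Real.rpow_le_rpow_of_exponent_le (by norm_num) hexp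
      _ = ((2 ^ (K * L) : ℕ) : ℝ) ^ (ρ - 1) := by
        rw [Real.rpow_mul (by norm_num), Real.rpow_natCast, Nat.cast_pow, Nat.cast_ofNat]
  have hcast : (dyadicScaled K m : ℝ) = (m + 1 : ℝ) * ((2 ^ (K * L) : ℕ) : ℝ) := by
    simp [dyadicScaled, L]
  rw [hcast]
  exact Real.mul_rpow_one_div_le (by linarith) (by positivity) (by positivity) hsucc_le

theorem le_pow {m : ℕ} (hm : 2 ≤ m) : dyadicScaled K m ≤ m ^ (2 * K + 2) :=
  calc dyadicScaled K m = (m + 1) * (2 ^ Nat.log 2 (m + 1)) ^ K := by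
        rw [dyadicScaled, ← pow_mul, Nat.mul_comm K]
    _ ≤ (m + 1) * (m + 1) ^ K := by gcongr; exact Nat.pow_log_le_self 2 (by omega)
    _ = (m + 1) ^ (K + 1) := by ring
    _ ≤ (m ^ 2) ^ (K + 1) := by gcongr; nlinarith
    _ = m ^ (2 * K + 2) := by ring

end dyadicScaled

theorem exists_nat_two_le_mul_sub_one_of_six_mul_lt {ρ₁ ρ₂ : ℝ} (hρ₁ : 1 < ρ₁)
    (hρ₁ρ₂ : 6 * ρ₁ < ρ₂) :
    ∃ K : ℕ, 2 ≤ K * (ρ₁ - 1) ∧ ((2 * K + 2 : ℕ) : ℝ) ≤ ρ₂ / (ρ₁ - 1) + 1 := by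
  have hpos : 0 < ρ₁ - 1 := by linarith
  refine ⟨⌈2 / (ρ₁ - 1)⌉₊, ?_, ?_⟩
  · exact (div_le_iff₀ hpos).mp (Nat.le_ceil _)
  · have hK : (⌈2 / (ρ₁ - 1)⌉₊ : ℝ) * (ρ₁ - 1) < 2 + (ρ₁ - 1) := by
      have := mul_lt_mul_of_pos_right (Nat.ceil_lt_add_one (by positivity : 0 ≤ 2 / (ρ₁ - 1))) hpos
      rwa [add_mul, one_mul, div_mul_cancel₀ _ hpos.ne'] at this
    have : (2 * ⌈2 / (ρ₁ - 1)⌉₊ + 1 : ℝ) ≤ ρ₂ / (ρ₁ - 1) := by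
      rw [le_div_iff₀ hpos]; nlinarith
    push_cast; linarith

/-- existence of a `(1/ρ₁)`-separated sequence of polynomial growth. -/
theorem exists_alphaSeparated_polynomial_growth
    (ρ₁ ρ₂ : ℝ) (hρ₁ : 1 < ρ₁) (hρ₁ρ₂ : 6 * ρ₁ < ρ₂) :
    ∃ q : ℕ → ℕ, StrictMono q ∧ (∀ m, 1 ≤ q m) ∧
      alphaSeparated q (1 / ρ₁) ∧
      (∀ m : ℕ, 1 ≤ m → m < q m) ∧
      ∃ m₁ : ℕ, ∀ m : ℕ, m₁ ≤ m →
        Real.log (q m) / Real.log m ≤ ρ₂ / (ρ₁ - 1) + 1 := by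
  obtain ⟨K, hK, hKρ₂⟩ := exists_nat_two_le_mul_sub_one_of_six_mul_lt hρ₁ hρ₁ρ₂
  have hsep : alphaSeparated (dyadicScaled K) (1 / ρ₁) :=
    alphaSeparated_of_dvd 1 (fun _ _ _ hmn => dyadicScaled.pow_dvd K hmn)
      (fun _ hm => dyadicScaled.rpow_one_div_le K hρ₁ hK hm)
  refine ⟨dyadicScaled K, dyadicScaled.strictMono K, fun m => (dyadicScaled.lt_self K m).pos,
    hsep, fun m _ => dyadicScaled.lt_self K m, 2, fun m hm => ?_⟩
  calc Real.log (dyadicScaled K m) / Real.log m ≤ ((2 * K + 2 : ℕ) : ℝ) :=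
        Real.log_div_log_le_of_le_pow (dyadicScaled.lt_self K m).pos (by omega)
          (dyadicScaled.le_pow K hm)
    _ ≤ ρ₂ / (ρ₁ - 1) + 1 := hKρ₂
end

section
/- Let ρ₁, ρ₂ be real numbers with 1 < ρ₁ and 6ρ₁ < ρ₂. Then there exists a strictly increasing sequence (q_t)_{t∈ℕ} of positive integers which is (1/ρ₁)-separated, satisfies sup_{n∈ℕ} Σ_{m=1}^{n−1} gcd(q_m, q_n)/q_n < ∞, and satisfies, for every ε > 0, (log q_t)/(log t) ≤ ρ₂/(ρ₁ − 1) + 1 + ε for all sufficiently large t. Consequently, for every ψ : ℕ → [0,1] and every γ ∈ [0,1], the gcd sum satisfies E(N) = Σ_{1≤m<n≤N} gcd(q_m,q_n)·min(ψ(q_m)/q_m, ψ(q_n)/q_n) = O(Σ_{n=1}^N ψ(q_n)). -/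
open MeasureTheory Filter Finset

/-!
The sequence is built in blocks: the `k`-th block consists of `2 ^ c k` consecutive multiples of
`2 ^ A k`, starting at `2 ^ (A k + 2 c k)`, with `A k ≈ 2 c k / (ρ₁ - 1)`. For two terms of one
block, `2 ^ A k ≥ q ^ (1 / ρ₁)` divides every combination `s q_m - t q_n`; a term of a later block
exceeds `(m ^ 5 + 1) q_m`, which forces `|s q_m - t q_n| ≥ q_m`. The gcd of two terms of one block
is at most their difference, so the current block contributes at most `1` to the gcd sum, and the
earlier blocks, being tiny, contribute at most `1` together. Finally
`c (k + 1) ≈ (7ρ₁ - 5) / (2ρ₁) · c k` gives `log q_t / log t ≲ (7ρ₁ - 5) / (ρ₁ - 1)`, which is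
below `ρ₂ / (ρ₁ - 1) + 1`.
-/

theorem le_abs_mul_sub_mul {a b M s t : ℤ} (ha : 0 ≤ a) (hab : (M + 1) * a ≤ b)
    (hs₀ : 0 ≤ s) (hs : s ≤ M) (ht : 0 ≤ t) (hne : s * a - t * b ≠ 0) : a ≤ |s * a - t * b| := by
  rcases ht.eq_or_lt with rfl | ht
  · have : 1 ≤ s := by
      by_contra! h
      obtain rfl : s = 0 := by omega
      simp at hne
    rw [zero_mul, sub_zero, abs_of_nonneg (by positivity)]
    nlinarith
  · have hsa : s * a ≤ M * a := mul_le_mul_of_nonneg_right hs ha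
    have hb : b ≤ t * b := le_mul_of_one_le_left (by nlinarith) ht
    rw [abs_of_nonpos (by linarith)]
    linarith

theorem sum_cast_div_le_one {ι : Type*} {s : Finset ι} {f : ι → ℕ} {b d : ℕ}
    (hs : s.card ≤ d) (hf : ∀ i ∈ s, f i * d ≤ b) : ∑ i ∈ s, (f i : ℝ) / b ≤ 1 := by
  rcases Nat.eq_zero_or_pos d with rfl | hd
  · simp [card_eq_zero.1 (Nat.le_zero.1 hs)]
  have hsum : (∑ i ∈ s, f i) * d ≤ d * b :=
    calc (∑ i ∈ s, f i) * d = ∑ i ∈ s, f i * d := sum_mul _ _ _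
      _ ≤ s.card • b := sum_le_card_nsmul _ _ _ hf
      _ ≤ d * b := by rw [smul_eq_mul]; exact Nat.mul_le_mul_right _ hs
  rw [← sum_div]
  exact div_le_one_of_le₀ (by exact_mod_cast Nat.le_of_mul_le_mul_left (by linarith) hd)
    (Nat.cast_nonneg _)

theorem le_mul_ceil_div {x b : ℝ} (hb : 0 < b) : x ≤ b * ⌈x / b⌉₊ := by
  have := Nat.le_ceil (x / b)
  rw [div_le_iff₀ hb] at this
  linarith

theorem mul_ceil_div_lt {x b : ℝ} (hb : 0 < b) (hx : 0 ≤ x) : b * ⌈x / b⌉₊ < x + b := by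
  have := mul_lt_mul_of_pos_left (Nat.ceil_lt_add_one (div_nonneg hx hb.le)) hb
  rwa [mul_add, mul_div_cancel₀ _ hb.ne', mul_one] at this

theorem gcdErr_le_mul_PsiSum {q : ℕ → ℕ} {ψ : ℕ → ℝ} {C : ℝ} (hψ : ∀ n, 0 ≤ ψ n)
    (hC : ∀ n, ∑ m ∈ Ico 1 n, (Nat.gcd (q m) (q n) : ℝ) / q n ≤ C) (N : ℕ) :
    gcdErr q ψ N ≤ C * PsiSum q ψ N := by
  rw [gcdErr, PsiSum, mul_sum]
  refine sum_le_sum fun n _ => ?_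
  calc ∑ m ∈ Ico 1 n, (Nat.gcd (q m) (q n) : ℝ) * min (ψ (q m) / q m) (ψ (q n) / q n)
      ≤ ∑ m ∈ Ico 1 n, (Nat.gcd (q m) (q n) : ℝ) / q n * ψ (q n) :=
        sum_le_sum fun m _ =>
          (mul_le_mul_of_nonneg_left (min_le_right _ _) (Nat.cast_nonneg _)).trans_eq (by ring)
    _ = (∑ m ∈ Ico 1 n, (Nat.gcd (q m) (q n) : ℝ) / q n) * ψ (q n) := (sum_mul _ _ _).symm
    _ ≤ C * ψ (q n) := mul_le_mul_of_nonneg_right (hC n) (hψ _)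

section Blocks

variable {A c : ℕ → ℕ} {k m n t : ℕ}

def blockStart (c : ℕ → ℕ) (k : ℕ) : ℕ := ∑ j ∈ range k, 2 ^ c j

theorem blockStart_succ (c : ℕ → ℕ) (k : ℕ) :
    blockStart c (k + 1) = blockStart c k + 2 ^ c k :=
  sum_range_succ _ _

theorem blockStart_strictMono (c : ℕ → ℕ) : StrictMono (blockStart c) :=
  strictMono_nat_of_lt_succ fun k => by
    rw [blockStart_succ]; exact Nat.lt_add_of_pos_right (by positivity)

theorem blockStart_succ_le_two_pow (hc : StrictMono c) (k : ℕ) :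
    blockStart c (k + 1) ≤ 2 ^ (c k + 1) := by
  induction k with
  | zero => simp [blockStart, pow_succ]
  | succ k ih =>
    have : 2 ^ (c k + 1) ≤ 2 ^ c (k + 1) := Nat.pow_le_pow_right two_pos (hc k.lt_succ_self)
    rw [blockStart_succ, pow_succ]
    omega

theorem exists_lt_blockStart_succ (c : ℕ → ℕ) (t : ℕ) : ∃ k, t < blockStart c (k + 1) :=
  ⟨t, t.lt_succ_self.trans_le ((blockStart_strictMono c).id_le _)⟩

/-- The index `k` of the block `[blockStart c k, blockStart c (k + 1))` containing `t`. -/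
def blockIndex (c : ℕ → ℕ) (t : ℕ) : ℕ := Nat.find (exists_lt_blockStart_succ c t)

theorem lt_blockStart_blockIndex_succ (c : ℕ → ℕ) (t : ℕ) :
    t < blockStart c (blockIndex c t + 1) :=
  Nat.find_spec (exists_lt_blockStart_succ c t)

theorem blockStart_blockIndex_le (c : ℕ → ℕ) (t : ℕ) :
    blockStart c (blockIndex c t) ≤ t := by
  cases h : blockIndex c t with
  | zero => simp [blockStart]
  | succ k => exact not_lt.1 (Nat.find_min (exists_lt_blockStart_succ c t) (by
      rw [← blockIndex, h]; exact k.lt_succ_self))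

theorem blockIndex_eq (h₁ : blockStart c k ≤ t) (h₂ : t < blockStart c (k + 1)) :
    blockIndex c t = k :=
  (Nat.find_eq_iff _).2
    ⟨h₂, fun _ hj => not_lt.2 (((blockStart_strictMono c).monotone hj).trans h₁)⟩

theorem le_blockIndex (ht : blockStart c k ≤ t) : k ≤ blockIndex c t := by
  by_contra! h
  exact (lt_blockStart_blockIndex_succ c t).not_ge
    (((blockStart_strictMono c).monotone h).trans ht)

def blockSeq (c A : ℕ → ℕ) (t : ℕ) : ℕ :=
  2 ^ A (blockIndex c t) * (2 ^ (2 * c (blockIndex c t)) + (t - blockStart c (blockIndex c t)))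

theorem blockSeq_eq (h₁ : blockStart c k ≤ t) (h₂ : t < blockStart c (k + 1)) :
    blockSeq c A t = 2 ^ A k * (2 ^ (2 * c k) + (t - blockStart c k)) := by
  rw [blockSeq, blockIndex_eq h₁ h₂]

theorem blockSeq_pos (t : ℕ) : 0 < blockSeq c A t := by
  unfold blockSeq; positivity

theorem two_pow_le_blockSeq_of_mem (h₁ : blockStart c k ≤ t) (h₂ : t < blockStart c (k + 1)) :
    2 ^ (A k + 2 * c k) ≤ blockSeq c A t := by
  rw [blockSeq_eq h₁ h₂, pow_add]
  exact Nat.mul_le_mul_left _ (Nat.le_add_right _ _)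

theorem blockSeq_lt_of_mem (h₁ : blockStart c k ≤ t) (h₂ : t < blockStart c (k + 1)) :
    blockSeq c A t < 2 ^ (A k + 2 * c k + 1) := by
  have hlen : t - blockStart c k < 2 ^ (2 * c k) := by
    have : 2 ^ c k ≤ 2 ^ (2 * c k) := Nat.pow_le_pow_right two_pos (by omega)
    rw [blockStart_succ] at h₂
    omega
  rw [blockSeq_eq h₁ h₂, pow_succ, pow_add, mul_assoc]
  exact Nat.mul_lt_mul_of_pos_left (by omega) (by positivity)

theorem gcd_blockSeq_le (h₁ : blockStart c k ≤ m) (hmn : m < n)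
    (h₂ : n < blockStart c (k + 1)) :
    Nat.gcd (blockSeq c A m) (blockSeq c A n) ≤ 2 ^ A k * (n - m) := by
  rw [blockSeq_eq h₁ (hmn.trans h₂), blockSeq_eq (h₁.trans hmn.le) h₂, Nat.gcd_mul_left,
    ← Nat.gcd_sub_self_right (by omega)]
  exact Nat.mul_le_mul_left _ ((Nat.gcd_le_right _ (by omega)).trans_eq (by omega))

section Monotone

variable (he : Monotone fun k => A k + 2 * c k)
include he

theorem two_pow_le_blockSeq (hn : blockStart c k ≤ n) :
    2 ^ (A k + 2 * c k) ≤ blockSeq c A n :=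
  (Nat.pow_le_pow_right two_pos (he (le_blockIndex hn))).trans
    (two_pow_le_blockSeq_of_mem (blockStart_blockIndex_le c n) (lt_blockStart_blockIndex_succ c n))

theorem blockSeq_lt_two_pow (hm : m < blockStart c (k + 1)) :
    blockSeq c A m < 2 ^ (A k + 2 * c k + 1) :=
  (blockSeq_lt_of_mem (blockStart_blockIndex_le c m) (lt_blockStart_blockIndex_succ c m)).trans_le
    (Nat.pow_le_pow_right two_pos (Nat.succ_le_succ (he (Nat.find_le hm))))

end Monotone

theorem blockSeq_strictMono (he : StrictMono fun k => A k + 2 * c k) :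
    StrictMono (blockSeq c A) := by
  refine strictMono_nat_of_lt_succ fun t => ?_
  set k := blockIndex c t
  have h₁ := blockStart_blockIndex_le c t
  have h₂ := lt_blockStart_blockIndex_succ c t
  rcases lt_or_ge (t + 1) (blockStart c (k + 1)) with h | h
  · rw [blockSeq_eq h₁ h₂, blockSeq_eq (h₁.trans t.le_succ) h]
    exact Nat.mul_lt_mul_of_pos_left (by omega) (by positivity)
  · calc blockSeq c A t < 2 ^ (A k + 2 * c k + 1) := blockSeq_lt_of_mem h₁ h₂
      _ ≤ 2 ^ (A (k + 1) + 2 * c (k + 1)) := Nat.pow_le_pow_right two_pos (he k.lt_succ_self)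
      _ ≤ blockSeq c A (t + 1) := two_pow_le_blockSeq he.monotone h

theorem blockSeq_rpow_le {α : ℝ} (hα₀ : 0 ≤ α)
    (hα : ∀ k, (A k + 2 * c k + 1 : ℝ) * α ≤ A k) (m : ℕ) :
    (blockSeq c A m : ℝ) ^ α ≤ 2 ^ A (blockIndex c m) := by
  set k := blockIndex c m
  have hq : (blockSeq c A m : ℝ) ≤ 2 ^ (A k + 2 * c k + 1) := by
    exact_mod_cast (blockSeq_lt_of_mem (blockStart_blockIndex_le c m)
      (lt_blockStart_blockIndex_succ c m)).le
  calc (blockSeq c A m : ℝ) ^ α ≤ ((2 : ℝ) ^ (A k + 2 * c k + 1)) ^ α :=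
        Real.rpow_le_rpow (by positivity) hq hα₀
    _ = 2 ^ ((A k + 2 * c k + 1 : ℝ) * α) := by
        rw [← Real.rpow_natCast, ← Real.rpow_mul zero_le_two]; push_cast; rfl
    _ ≤ 2 ^ (A k : ℝ) := Real.rpow_le_rpow_of_exponent_le one_le_two (hα k)
    _ = 2 ^ A k := Real.rpow_natCast _ _

theorem exists_log_blockSeq_div_log_le {K : ℕ} {κ : ℝ}
    (h : ∀ k ≥ K, (A (k + 1) + 2 * c (k + 1) + 1 : ℝ) ≤ κ * c k) :
    ∃ t₀, ∀ t ≥ t₀, Real.log (blockSeq c A t) / Real.log t ≤ κ := by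
  refine ⟨blockStart c (K + 1), fun t ht => ?_⟩
  have hKt := le_blockIndex ht
  obtain ⟨k, hk⟩ : ∃ k, blockIndex c t = k + 1 := ⟨blockIndex c t - 1, by omega⟩
  have hK : K ≤ k := by omega
  have h₁ := blockStart_blockIndex_le c t
  have h₂ := lt_blockStart_blockIndex_succ c t
  rw [hk] at h₁ h₂
  have hκ : 0 ≤ κ := by
    have : (0 : ℝ) ≤ A (k + 1) + 2 * c (k + 1) := by positivity
    have : (0 : ℝ) < κ * c k := by linarith [h k hK]
    exact (pos_of_mul_pos_left this (Nat.cast_nonneg _)).le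
  have hlog_t : (c k : ℝ) * Real.log 2 ≤ Real.log t := by
    rw [← Real.log_pow]
    refine Real.log_le_log (by positivity) ?_
    rw [blockStart_succ] at h₁
    exact_mod_cast (Nat.le_add_left _ _).trans h₁
  have hlog_q :
      Real.log (blockSeq c A t) ≤ (A (k + 1) + 2 * c (k + 1) + 1 : ℝ) * Real.log 2 := by
    have := Real.log_le_log (by exact_mod_cast blockSeq_pos t)
      (by exact_mod_cast (blockSeq_lt_of_mem h₁ h₂).le : (blockSeq c A t : ℝ) ≤ 2 ^ _)
    rw [Real.log_pow] at this
    exact_mod_cast this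
  refine div_le_of_le_mul₀ (Real.log_natCast_nonneg t) hκ ?_
  calc Real.log (blockSeq c A t) ≤ (A (k + 1) + 2 * c (k + 1) + 1 : ℝ) * Real.log 2 := hlog_q
    _ ≤ κ * c k * Real.log 2 := by gcongr; exact h k hK
    _ ≤ κ * Real.log t := by rw [mul_assoc]; gcongr

theorem strictMono_of_gap (hgap : ∀ k, A k + 7 * c k + 6 ≤ A (k + 1) + 2 * c (k + 1)) :
    StrictMono fun k => A k + 2 * c k :=
  strictMono_nat_of_lt_succ fun k => by have := hgap k; omega

section Gap

variable (hc : StrictMono c) (hgap : ∀ k, A k + 7 * c k + 6 ≤ A (k + 1) + 2 * c (k + 1))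
include hc hgap

theorem blockStart_pow_mul_blockSeq_le (hm : m < blockStart c k) (hn : blockStart c k ≤ n) :
    blockStart c k ^ 5 * blockSeq c A m ≤ blockSeq c A n := by
  obtain _ | j := k
  · simp [blockStart] at hm
  have he := (strictMono_of_gap hgap).monotone
  calc blockStart c (j + 1) ^ 5 * blockSeq c A m
      ≤ (2 ^ (c j + 1)) ^ 5 * 2 ^ (A j + 2 * c j + 1) :=
        Nat.mul_le_mul (Nat.pow_le_pow_left (blockStart_succ_le_two_pow hc j) 5)
          (blockSeq_lt_two_pow he hm).le
    _ = 2 ^ (A j + 7 * c j + 6) := by ring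
    _ ≤ 2 ^ (A (j + 1) + 2 * c (j + 1)) := Nat.pow_le_pow_right two_pos (hgap j)
    _ ≤ blockSeq c A n := two_pow_le_blockSeq he hn

theorem sum_gcd_blockSeq_div_le_two (n : ℕ) :
    ∑ m ∈ range n, (Nat.gcd (blockSeq c A m) (blockSeq c A n) : ℝ) / blockSeq c A n ≤ 2 := by
  have h₁ := blockStart_blockIndex_le c n
  have h₂ := lt_blockStart_blockIndex_succ c n
  set k := blockIndex c n
  have earlier : ∑ m ∈ range (blockStart c k),
      (Nat.gcd (blockSeq c A m) (blockSeq c A n) : ℝ) / blockSeq c A n ≤ 1 := by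
    refine sum_cast_div_le_one (card_range _).le fun m hm => ?_
    calc Nat.gcd (blockSeq c A m) (blockSeq c A n) * blockStart c k
        ≤ blockStart c k ^ 5 * blockSeq c A m := by
          rw [mul_comm]
          exact Nat.mul_le_mul (Nat.le_self_pow (by norm_num) _)
            (Nat.gcd_le_left _ (blockSeq_pos m))
      _ ≤ blockSeq c A n := blockStart_pow_mul_blockSeq_le hc hgap (mem_range.1 hm) h₁
  have current : ∑ m ∈ Ico (blockStart c k) n,
      (Nat.gcd (blockSeq c A m) (blockSeq c A n) : ℝ) / blockSeq c A n ≤ 1 := by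
    refine sum_cast_div_le_one (d := 2 ^ c k) ?_ fun m hm => ?_
    · rw [Nat.card_Ico]; rw [blockStart_succ] at h₂; omega
    obtain ⟨hm₁, hm₂⟩ := mem_Ico.1 hm
    calc Nat.gcd (blockSeq c A m) (blockSeq c A n) * 2 ^ c k
        ≤ 2 ^ A k * (n - m) * 2 ^ c k := Nat.mul_le_mul_right _ (gcd_blockSeq_le hm₁ hm₂ h₂)
      _ ≤ 2 ^ A k * 2 ^ c k * 2 ^ c k := by
          gcongr; rw [blockStart_succ] at h₂; omega
      _ = 2 ^ (A k + 2 * c k) := by ring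
      _ ≤ blockSeq c A n := two_pow_le_blockSeq_of_mem h₁ h₂
  rw [← sum_range_add_sum_Ico _ h₁]
  linarith

theorem two_pow_le_abs_mul_sub_mul {s t : ℕ} (hmn : m < n) (hs : s ≤ m ^ 5)
    (hne : (s : ℤ) * blockSeq c A m - t * blockSeq c A n ≠ 0) :
    2 ^ A (blockIndex c m) ≤ |(s : ℤ) * blockSeq c A m - t * blockSeq c A n| := by
  have h₁ := blockStart_blockIndex_le c m
  have h₂ := lt_blockStart_blockIndex_succ c m
  set k := blockIndex c m
  rcases lt_or_ge n (blockStart c (k + 1)) with hn | hn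
  · have hdvd : (2 : ℤ) ^ A k ∣ s * blockSeq c A m - t * blockSeq c A n := by
      rw [blockSeq_eq h₁ h₂, blockSeq_eq (h₁.trans hmn.le) hn]
      push_cast
      exact dvd_sub ((dvd_mul_right _ _).mul_left _) ((dvd_mul_right _ _).mul_left _)
    exact Int.le_of_dvd (abs_pos.2 hne) ((dvd_abs _ _).2 hdvd)
  · have hpow : m ^ 5 + 1 ≤ blockStart c (k + 1) ^ 5 :=
      (Nat.pow_lt_pow_left m.lt_succ_self (by norm_num)).trans_le (Nat.pow_le_pow_left h₂ 5)
    have hcross : (m ^ 5 + 1) * blockSeq c A m ≤ blockSeq c A n :=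
      (Nat.mul_le_mul_right _ hpow).trans (blockStart_pow_mul_blockSeq_le hc hgap h₂ hn)
    calc (2 : ℤ) ^ A k ≤ 2 ^ (A k + 2 * c k) := pow_le_pow_right₀ one_le_two (by omega)
      _ ≤ blockSeq c A m := by exact_mod_cast two_pow_le_blockSeq_of_mem h₁ h₂
      _ ≤ _ := le_abs_mul_sub_mul (M := ((m ^ 5 : ℕ) : ℤ)) (by positivity)
          (by exact_mod_cast hcross) (by positivity) (by exact_mod_cast hs) (by positivity) hne

theorem alphaSeparated_blockSeq {α : ℝ} (hα₀ : 0 ≤ α)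
    (hα : ∀ k, (A k + 2 * c k + 1 : ℝ) * α ≤ A k) : alphaSeparated (blockSeq c A) α := by
  refine ⟨0, fun m n _ hmn ⟨s, t, hD, hlt, hs⟩ => ?_⟩
  have hle : ((2 ^ A (blockIndex c m) : ℤ) : ℝ) ≤
      ((|(s : ℤ) * blockSeq c A m - t * blockSeq c A n| : ℤ) : ℝ) :=
    Int.cast_le.2 (two_pow_le_abs_mul_sub_mul hc hgap hmn hs (abs_pos.1 (by omega)))
  push_cast at hle hlt
  linarith [blockSeq_rpow_le hα₀ hα m]

end Gap

end Blocks

section Parameters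

/-- The `k`-th block has length `2 ^ sepLogLength r k`. The ratio `(7r - 5) / (2r)` of
consecutive exponents is just large enough for the gap between blocks that separation needs, and
small enough for the growth exponent `6r / (r - 1) + 1`. -/
noncomputable def sepLogLength (r : ℝ) : ℕ → ℕ
  | 0 => 0
  | k + 1 => ⌈(sepLogLength r k * (7 * r - 5) + 7 * (r - 1)) / (2 * r)⌉₊

/-- Chosen so that every value `q` on the `k`-th block satisfies
`q ^ (1 / r) ≤ 2 ^ sepValuation r k`. -/
noncomputable def sepValuation (r : ℝ) (k : ℕ) : ℕ :=
  ⌈(2 * sepLogLength r k + 1) / (r - 1)⌉₊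

noncomputable def sepSeq (r : ℝ) : ℕ → ℕ := blockSeq (sepLogLength r) (sepValuation r)

variable {r : ℝ} (hr : 1 < r)
include hr

theorem sepLogLength_succ_bounds (k : ℕ) :
    sepLogLength r k * (7 * r - 5) + 7 * (r - 1) ≤ 2 * r * sepLogLength r (k + 1) ∧
      2 * r * sepLogLength r (k + 1) < sepLogLength r k * (7 * r - 5) + 7 * (r - 1) + 2 * r := by
  have h2r : 0 < 2 * r := by linarith
  have hx : 0 ≤ sepLogLength r k * (7 * r - 5) + 7 * (r - 1) := by
    have := (Nat.cast_nonneg (α := ℝ) (sepLogLength r k)); nlinarith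
  exact ⟨le_mul_ceil_div h2r, mul_ceil_div_lt h2r hx⟩

theorem sepValuation_bounds (k : ℕ) :
    2 * sepLogLength r k + 1 ≤ (r - 1) * sepValuation r k ∧
      (r - 1) * sepValuation r k < 2 * sepLogLength r k + 1 + (r - 1) :=
  ⟨le_mul_ceil_div (by linarith), mul_ceil_div_lt (by linarith) (by positivity)⟩

theorem sepLogLength_strictMono : StrictMono (sepLogLength r) := by
  refine strictMono_nat_of_lt_succ fun k => ?_
  have := (sepLogLength_succ_bounds hr k).1
  have : (0 : ℝ) ≤ sepLogLength r k := Nat.cast_nonneg _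
  exact_mod_cast (show (sepLogLength r k : ℝ) < sepLogLength r (k + 1) by nlinarith)

theorem sepValuation_gap (k : ℕ) :
    sepValuation r k + 7 * sepLogLength r k + 6 ≤
      sepValuation r (k + 1) + 2 * sepLogLength r (k + 1) := by
  obtain ⟨-, hA⟩ := sepValuation_bounds hr k
  obtain ⟨hA', -⟩ := sepValuation_bounds hr (k + 1)
  have hc' := (sepLogLength_succ_bounds hr k).1
  have key : (r - 1) * (sepValuation r k + 7 * sepLogLength r k + 6 : ℝ) ≤
      (r - 1) * (sepValuation r (k + 1) + 2 * sepLogLength r (k + 1) : ℝ) := by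
    linarith
  exact_mod_cast le_of_mul_le_mul_left key (by linarith)

theorem sepValuation_add_mul_inv_le (k : ℕ) :
    (sepValuation r k + 2 * sepLogLength r k + 1 : ℝ) * (1 / r) ≤ sepValuation r k := by
  rw [← div_eq_mul_one_div, div_le_iff₀ (by linarith)]
  linarith [(sepValuation_bounds hr k).1]

theorem sepValuation_succ_le {p : ℝ} (hp : 6 * r < p) {k : ℕ}
    (hk : 3 * r ≤ sepLogLength r k) :
    (sepValuation r (k + 1) + 2 * sepLogLength r (k + 1) + 1 : ℝ) ≤
      (p / (r - 1) + 1) * sepLogLength r k := by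
  have hr1 : 0 < r - 1 := by linarith
  obtain ⟨-, hA⟩ := sepValuation_bounds hr (k + 1)
  have hc' := (sepLogLength_succ_bounds hr k).2
  have hpc : 6 * r * sepLogLength r k ≤ p * sepLogLength r k :=
    mul_le_mul_of_nonneg_right hp.le (Nat.cast_nonneg _)
  rw [div_add_one hr1.ne', div_mul_eq_mul_div, le_div_iff₀ hr1]
  linarith

theorem exists_log_sepSeq_div_log_le {p : ℝ} (hp : 6 * r < p) :
    ∃ t₀, ∀ t ≥ t₀, Real.log (sepSeq r t) / Real.log t ≤ p / (r - 1) + 1 :=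
  exists_log_blockSeq_div_log_le (K := ⌈3 * r⌉₊) fun k hk =>
    sepValuation_succ_le hr hp <| (Nat.ceil_le.1 hk).trans
      (Nat.cast_le.2 ((sepLogLength_strictMono hr).id_le k))

end Parameters

/-- existence of a `(1/ρ₁)`-separated sequence of polynomial growth with
bounded gcd sums, which therefore satisfies `E(N) = O(Ψ(N))` for every `ψ` and `γ`. -/
theorem exists_alphaSeparated_polynomial_growth_gcd_bounded
    (ρ₁ ρ₂ : ℝ) (hρ₁ : 1 < ρ₁) (hρ₁ρ₂ : 6 * ρ₁ < ρ₂) :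
    ∃ q : ℕ → ℕ, StrictMono q ∧ (∀ t, 1 ≤ q t) ∧
      alphaSeparated q (1 / ρ₁) ∧
      (∃ Cg : ℝ, ∀ n : ℕ,
        ∑ m ∈ Finset.Ico 1 n, (Nat.gcd (q m) (q n) : ℝ) / (q n : ℝ) ≤ Cg) ∧
      (∀ ε : ℝ, 0 < ε → ∃ t₀ : ℕ, ∀ t : ℕ, t₀ ≤ t →
        Real.log (q t) / Real.log t ≤ ρ₂ / (ρ₁ - 1) + 1 + ε) ∧
      (∀ ψ : ℕ → ℝ, (∀ n, ψ n ∈ Set.Icc (0:ℝ) 1) →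
        ∀ γ : ℝ, γ ∈ Set.Icc (0:ℝ) 1 →
          ∃ C : ℝ, ∀ N : ℕ, gcdErr q ψ N ≤ C * PsiSum q ψ N) := by
  have hc := sepLogLength_strictMono hρ₁
  have hgap := sepValuation_gap hρ₁
  have hgcd (n : ℕ) :
      ∑ m ∈ Ico 1 n, (Nat.gcd (sepSeq ρ₁ m) (sepSeq ρ₁ n) : ℝ) / sepSeq ρ₁ n ≤ 2 :=
    (sum_le_sum_of_subset_of_nonneg (range_eq_Ico n ▸ Ico_subset_Ico_left zero_le_one)
      fun _ _ _ => by positivity).trans (sum_gcd_blockSeq_div_le_two hc hgap n)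
  obtain ⟨t₀, hgrowth⟩ := exists_log_sepSeq_div_log_le hρ₁ hρ₁ρ₂
  refine ⟨sepSeq ρ₁, blockSeq_strictMono (strictMono_of_gap hgap), fun t => blockSeq_pos t,
    alphaSeparated_blockSeq hc hgap (by positivity) (sepValuation_add_mul_inv_le hρ₁), ⟨2, hgcd⟩,
    fun ε hε => ⟨t₀, fun t ht => (hgrowth t ht).trans (by linarith)⟩,
    fun ψ hψ _ _ => ⟨2, gcdErr_le_mul_PsiSum (fun n => (hψ n).1) hgcd⟩⟩
end
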